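/- Main theorem, part (i): Let g be C¹ with Lipschitz Jacobian J, A ∈ ℝ^{m×n}, y ∈ ran(A), and consider the gradient flow θ'(t) = −∇_θ (1/(2m))‖A g(θ) − y‖² with θ(0)=θ₀. If ‖y − A g(θ₀)‖/σ_A < σ_min(J(θ₀))²/(4 Lip(J)), then ‖y(t) − y‖ ≤ ‖y(0) − y‖ exp(−σ_min(J(θ₀))² σ_A² t /(4m)) for all t ≥ 0, where y(t) = A g(θ(t)) and σ_A = inf_{z∈ran(A),z≠0}‖Aᵀz‖/‖z‖. -/

import Mathlib

open MeasureTheory ProbabilityTheory Real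

/-- Euclidean (ℓ²) norm of a real vector. -/
noncomputable def e2norm {ι : Type*} [Fintype ι] (x : ι → ℝ) : ℝ :=
  Real.sqrt (∑ i, x i ^ 2)

/-- Operator (spectral) norm of a real matrix. -/
noncomputable def opN {α β : Type*} [Fintype α] [Fintype β]
    (M : Matrix α β ℝ) : ℝ :=
  sSup {c | ∃ x : β → ℝ, e2norm x = 1 ∧ c = e2norm (M.mulVec x)}

/-- Smallest singular value of a real matrix (as `inf` of `‖Mᵀ v‖` over unit vectors `v`). -/
noncomputable def sigmaMin {α β : Type*} [Fintype α] [Fintype β]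
    (M : Matrix α β ℝ) : ℝ :=
  sInf {c | ∃ v : α → ℝ, e2norm v = 1 ∧ c = e2norm (M.transpose.mulVec v)}

/-- Frobenius norm of a `k × d` array. -/
noncomputable def frobN {k d : ℕ} (W : Fin k → Fin d → ℝ) : ℝ :=
  Real.sqrt (∑ i, ∑ j, W i j ^ 2)

noncomputable def toE {k : Type*} [Fintype k] (x : k → ℝ) : EuclideanSpace ℝ k :=
  (WithLp.equiv 2 _).symm x

lemma e2norm_eq {k : Type*} [Fintype k] (x : k → ℝ) : e2norm x = ‖toE x‖ := by
  simp [e2norm, toE, EuclideanSpace.norm_eq, sq_abs]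

example : True := trivial
lemma toE_add {k : Type*} [Fintype k] (x y : k → ℝ) : toE (x + y) = toE x + toE y := rfl
lemma toE_sub {k : Type*} [Fintype k] (x y : k → ℝ) : toE (x - y) = toE x - toE y := rfl
lemma toE_smul {k : Type*} [Fintype k] (c : ℝ) (x : k → ℝ) : toE (c • x) = c • toE x := rfl
lemma toE_zero {k : Type*} [Fintype k] : toE (0 : k → ℝ) = 0 := rfl

lemma e2norm_nonneg {k : Type*} [Fintype k] (x : k → ℝ) : 0 ≤ e2norm x := Real.sqrt_nonneg _
lemma e2norm_zero {k : Type*} [Fintype k] : e2norm (0 : k → ℝ) = 0 := by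
  simp [e2norm_eq, toE_zero]
lemma e2norm_smul {k : Type*} [Fintype k] (c : ℝ) (x : k → ℝ) :
    e2norm (c • x) = |c| * e2norm x := by
  simp [e2norm_eq, toE_smul, norm_smul, Real.norm_eq_abs]
lemma e2norm_neg {k : Type*} [Fintype k] (x : k → ℝ) : e2norm (-x) = e2norm x := by
  have : (-x) = (-1 : ℝ) • x := by simp
  rw [this, e2norm_smul]; simp
lemma e2norm_sub_rev {k : Type*} [Fintype k] (x y : k → ℝ) :
    e2norm (x - y) = e2norm (y - x) := by
  rw [← e2norm_neg]; congr 1; abel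
lemma e2norm_eq_zero_iff {k : Type*} [Fintype k] (x : k → ℝ) : e2norm x = 0 ↔ x = 0 := by
  rw [e2norm_eq, norm_eq_zero]
  constructor
  · intro h; funext i; exact congrFun (congrArg (fun z : EuclideanSpace ℝ k => (z : k → ℝ)) h) i
  · rintro rfl; rfl
lemma e2norm_pos_of_ne {k : Type*} [Fintype k] {x : k → ℝ} (h : x ≠ 0) : 0 < e2norm x :=
  lt_of_le_of_ne (e2norm_nonneg x) (fun h' => h ((e2norm_eq_zero_iff x).1 h'.symm))
lemma e2norm_add_le {k : Type*} [Fintype k] (x y : k → ℝ) :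
    e2norm (x + y) ≤ e2norm x + e2norm y := by
  simp only [e2norm_eq, toE_add]; exact norm_add_le _ _
lemma e2norm_sq {k : Type*} [Fintype k] (x : k → ℝ) : e2norm x ^ 2 = ∑ i, x i ^ 2 := by
  rw [e2norm]; exact Real.sq_sqrt (Finset.sum_nonneg fun i _ => sq_nonneg _)
lemma dotProduct_le_e2norm {k : Type*} [Fintype k] (x y : k → ℝ) :
    dotProduct x y ≤ e2norm x * e2norm y := by
  have h : dotProduct x y = inner ℝ (toE x) (toE y) := by
    simp [dotProduct, toE, PiLp.inner_apply, RCLike.inner_apply, mul_comm]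
  rw [h, e2norm_eq, e2norm_eq]
  exact real_inner_le_norm _ _
lemma dotProduct_self_eq {k : Type*} [Fintype k] (x : k → ℝ) :
    dotProduct x x = e2norm x ^ 2 := by
  rw [e2norm_sq]; simp [dotProduct, sq]
lemma mulVec_e2norm_le_frob {α β : Type*} [Fintype α] [Fintype β]
    (M : Matrix α β ℝ) (x : β → ℝ) (hx : e2norm x = 1) :
    e2norm (M.mulVec x) ≤ Real.sqrt (∑ i, ∑ j, M i j ^ 2) := by
  have h1 : ∀ i, (M.mulVec x i) ^ 2 ≤ (∑ j, M i j ^ 2) * (∑ j, x j ^ 2) := fun i =>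
    Finset.sum_mul_sq_le_sq_mul_sq Finset.univ (M i) x
  have hx2 : ∑ j, x j ^ 2 = 1 := by
    have := e2norm_sq x; rw [hx] at this; simpa using this.symm
  rw [e2norm]
  apply Real.sqrt_le_sqrt
  calc ∑ i, M.mulVec x i ^ 2 ≤ ∑ i, (∑ j, M i j ^ 2) * (∑ j, x j ^ 2) :=
        Finset.sum_le_sum fun i _ => h1 i
    _ = ∑ i, ∑ j, M i j ^ 2 := by rw [hx2]; simp
lemma opN_set_bddAbove {α β : Type*} [Fintype α] [Fintype β] (M : Matrix α β ℝ) :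
    BddAbove {c | ∃ x : β → ℝ, e2norm x = 1 ∧ c = e2norm (M.mulVec x)} := by
  refine ⟨Real.sqrt (∑ i, ∑ j, M i j ^ 2), ?_⟩
  rintro c ⟨x, hx, rfl⟩
  exact mulVec_e2norm_le_frob M x hx

lemma opN_nonneg {α β : Type*} [Fintype α] [Fintype β] (M : Matrix α β ℝ) : 0 ≤ opN M := by
  rcases Set.eq_empty_or_nonempty {c | ∃ x : β → ℝ, e2norm x = 1 ∧ c = e2norm (M.mulVec x)} with h | h
  · rw [opN, h, Real.sSup_empty]
  · obtain ⟨c, x, hx, rfl⟩ := h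
    exact le_trans (e2norm_nonneg _) (le_csSup (opN_set_bddAbove M) ⟨x, hx, rfl⟩)

lemma e2norm_mulVec_le {α β : Type*} [Fintype α] [Fintype β] (M : Matrix α β ℝ) (x : β → ℝ) :
    e2norm (M.mulVec x) ≤ opN M * e2norm x := by
  rcases eq_or_ne x 0 with rfl | hx
  · simp [Matrix.mulVec_zero, e2norm_zero]
  · have hpos := e2norm_pos_of_ne hx
    set c := (e2norm x)⁻¹ with hc
    have hcpos : 0 < c := inv_pos.2 hpos
    have hu : e2norm (c • x) = 1 := by
      rw [e2norm_smul, abs_of_pos hcpos, hc, inv_mul_cancel₀ (ne_of_gt hpos)]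
    have hin : e2norm (M.mulVec (c • x)) ≤ opN M :=
      le_csSup (opN_set_bddAbove M) ⟨c • x, hu, rfl⟩
    have heq : e2norm (M.mulVec (c • x)) = c * e2norm (M.mulVec x) := by
      rw [Matrix.mulVec_smul, e2norm_smul, abs_of_pos hcpos]
    rw [heq] at hin
    calc e2norm (M.mulVec x) = (c * e2norm (M.mulVec x)) * e2norm x := by
          rw [hc, mul_comm _ (e2norm (M.mulVec x)), mul_assoc, inv_mul_cancel₀ (ne_of_gt hpos), mul_one]
      _ ≤ opN M * e2norm x := by
          apply mul_le_mul_of_nonneg_right hin (le_of_lt hpos)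

lemma e2norm_transpose_mulVec_le {α β : Type*} [Fintype α] [Fintype β]
    (M : Matrix α β ℝ) (v : α → ℝ) :
    e2norm (M.transpose.mulVec v) ≤ opN M * e2norm v := by
  set w := M.transpose.mulVec v with hw
  have key : e2norm w ^ 2 = dotProduct v (M.mulVec w) := by
    rw [← dotProduct_self_eq]
    have h2 : dotProduct w w = dotProduct (M.mulVec w) v := by
      conv_lhs => rw [hw]
      rw [Matrix.dotProduct_mulVec, Matrix.vecMul_transpose]
    rw [h2, dotProduct_comm]
  have h1 : e2norm w ^ 2 ≤ e2norm v * (opN M * e2norm w) := by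
    rw [key]
    calc dotProduct v (M.mulVec w) ≤ e2norm v * e2norm (M.mulVec w) :=
          dotProduct_le_e2norm _ _
      _ ≤ e2norm v * (opN M * e2norm w) := by
          apply mul_le_mul_of_nonneg_left (e2norm_mulVec_le M w) (e2norm_nonneg v)
  rcases eq_or_lt_of_le (e2norm_nonneg w) with h0 | h0
  · rw [← h0]; exact mul_nonneg (opN_nonneg M) (e2norm_nonneg v)
  · have := h1
    rw [pow_two] at this
    nlinarith
lemma sigmaMin_set_bddBelow {α β : Type*} [Fintype α] [Fintype β] (M : Matrix α β ℝ) :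
    BddBelow {c | ∃ v : α → ℝ, e2norm v = 1 ∧ c = e2norm (M.transpose.mulVec v)} := by
  refine ⟨0, ?_⟩
  rintro c ⟨v, hv, rfl⟩
  exact e2norm_nonneg _

lemma sigmaMin_nonneg {α β : Type*} [Fintype α] [Fintype β] (M : Matrix α β ℝ) :
    0 ≤ sigmaMin M := by
  rcases Set.eq_empty_or_nonempty
      {c | ∃ v : α → ℝ, e2norm v = 1 ∧ c = e2norm (M.transpose.mulVec v)} with h | h
  · rw [sigmaMin, h, Real.sInf_empty]
  · exact le_csInf h (by rintro c ⟨v, hv, rfl⟩; exact e2norm_nonneg _)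

lemma sigmaMin_mul_le {α β : Type*} [Fintype α] [Fintype β] (M : Matrix α β ℝ) (v : α → ℝ) :
    sigmaMin M * e2norm v ≤ e2norm (M.transpose.mulVec v) := by
  rcases eq_or_ne v 0 with rfl | hv
  · simp [e2norm_zero, Matrix.mulVec_zero]
  · have hpos := e2norm_pos_of_ne hv
    set c := (e2norm v)⁻¹ with hc
    have hcpos : 0 < c := inv_pos.2 hpos
    have hu : e2norm (c • v) = 1 := by
      rw [e2norm_smul, abs_of_pos hcpos, hc, inv_mul_cancel₀ (ne_of_gt hpos)]
    have hin : sigmaMin M ≤ e2norm (M.transpose.mulVec (c • v)) :=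
      csInf_le (sigmaMin_set_bddBelow M) ⟨c • v, hu, rfl⟩
    rw [Matrix.mulVec_smul, e2norm_smul, abs_of_pos hcpos] at hin
    calc sigmaMin M * e2norm v ≤ (c * e2norm (M.transpose.mulVec v)) * e2norm v :=
          mul_le_mul_of_nonneg_right hin (le_of_lt hpos)
      _ = e2norm (M.transpose.mulVec v) := by
        rw [hc, mul_comm _ (e2norm (M.transpose.mulVec v)), mul_assoc, inv_mul_cancel₀ (ne_of_gt hpos), mul_one]

lemma sigmaMin_perturb {α β : Type*} [Fintype α] [Fintype β] (M N : Matrix α β ℝ)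
    (hne : ∃ v : α → ℝ, e2norm v = 1) :
    sigmaMin N - opN (N - M) ≤ sigmaMin M := by
  obtain ⟨v₀, hv₀⟩ := hne
  rw [show sigmaMin M = sInf {c | ∃ v : α → ℝ, e2norm v = 1 ∧
      c = e2norm (M.transpose.mulVec v)} from rfl]
  refine le_csInf ⟨_, ⟨v₀, hv₀, rfl⟩⟩ ?_
  rintro c ⟨v, hv, rfl⟩
  have h1 : sigmaMin N ≤ e2norm (N.transpose.mulVec v) :=
    (mul_one (sigmaMin N)) ▸ (hv ▸ sigmaMin_mul_le N v)
  have h2 : e2norm (N.transpose.mulVec v) ≤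
      e2norm (M.transpose.mulVec v) + e2norm ((N - M).transpose.mulVec v) := by
    have hsplit : N.transpose.mulVec v =
        M.transpose.mulVec v + (N - M).transpose.mulVec v := by
      rw [Matrix.transpose_sub, Matrix.sub_mulVec]
      abel
    rw [hsplit]
    exact e2norm_add_le _ _
  have h3 : e2norm ((N - M).transpose.mulVec v) ≤ opN (N - M) := by
    have := e2norm_transpose_mulVec_le (N - M) v
    rwa [hv, mul_one] at this
  linarith
lemma dot_shift {m n p : ℕ} (A : Matrix (Fin m) (Fin n) ℝ)
    (Jm : Matrix (Fin n) (Fin p) ℝ) (r : Fin m → ℝ) (z : Fin p → ℝ) :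
    dotProduct r (A.mulVec (Jm.mulVec z)) =
      dotProduct (Jm.transpose.mulVec (A.transpose.mulVec r)) z := by
  rw [Matrix.dotProduct_mulVec, ← Matrix.mulVec_transpose,
    Matrix.dotProduct_mulVec, ← Matrix.mulVec_transpose]

lemma aux_alg {a s ψ b ε m : ℝ} (ha : 0 ≤ a) (hb : 0 < b) (hε : 0 < ε) (hm : 0 < m)
    (hs : 0 ≤ s) (hlow : b * s ≤ a) (hψ : ψ = Real.sqrt (s ^ 2 + ε ^ 2)) :
    a / m ≤ a ^ 2 / (b * m * ψ) + b * ε / m := by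
  have hψpos : 0 < ψ := hψ ▸ Real.sqrt_pos.2 (by positivity)
  have hψle : ψ ≤ s + ε := by
    rw [hψ]
    calc Real.sqrt (s ^ 2 + ε ^ 2) ≤ Real.sqrt ((s + ε) ^ 2) :=
          Real.sqrt_le_sqrt (by nlinarith)
      _ = s + ε := Real.sqrt_sq (by positivity)
  have key : a * (b * ψ) ≤ a ^ 2 + (b * ψ) * (b * ε) := by
    rcases le_or_gt (b * ψ) a with h | h
    · nlinarith [mul_le_mul_of_nonneg_left h ha,
        mul_pos (mul_pos hb hψpos) (mul_pos hb hε)]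
    · have h1 : b * ψ - a ≤ b * ε := by nlinarith
      nlinarith [mul_le_mul h.le h1 (by linarith) (le_of_lt (mul_pos hb hψpos))]
  have h2 : a - b * ε ≤ a ^ 2 / (b * ψ) := by
    rw [le_div_iff₀ (mul_pos hb hψpos)]
    nlinarith [key]
  have h3 : a ≤ a ^ 2 / (b * ψ) + b * ε := by linarith
  have h5 : a / m ≤ (a ^ 2 / (b * ψ) + b * ε) / m := by gcongr
  have heq : (a ^ 2 / (b * ψ) + b * ε) / m = a ^ 2 / (b * m * ψ) + b * ε / m := by
    field_simp
  linarith [heq ▸ h5]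
set_option maxHeartbeats 2000000 in
/-- Main theorem, part (i): under the initialization condition
`‖y - A g(θ₀)‖/σ_A < σ_min(J(θ₀))²/(4 Lip(J))`, the gradient flow of
`θ ↦ (1/(2m))‖A g(θ) - y‖²` satisfies
`‖y(t) - y‖ ≤ ‖y(0) - y‖ exp(-σ_min(J(θ₀))² σ_A² t/(4m))` for all `t ≥ 0`. -/
theorem dip_main_convergence {m n p : ℕ} (hm : 0 < m)
    (A : Matrix (Fin m) (Fin n) ℝ) (y : Fin m → ℝ)
    (hy : ∃ x : Fin n → ℝ, y = A.mulVec x)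
    (g : (Fin p → ℝ) → Fin n → ℝ)
    (J : (Fin p → ℝ) → Matrix (Fin n) (Fin p) ℝ)
    (hg : ∀ θv : Fin p → ℝ,
      HasFDerivAt g (LinearMap.toContinuousLinearMap ((J θv).mulVecLin)) θv)
    (L : ℝ) (hL : 0 < L)
    (hLip : ∀ θ₁ θ₂ : Fin p → ℝ, opN (J θ₁ - J θ₂) ≤ L * e2norm (θ₁ - θ₂))
    (σA : ℝ)
    (hσA : σA = sInf {c | ∃ w : Fin m → ℝ, (∃ x : Fin n → ℝ, w = A.mulVec x) ∧
      w ≠ 0 ∧ c = e2norm (A.transpose.mulVec w) / e2norm w})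
    (hσApos : 0 < σA)
    (θ : ℝ → Fin p → ℝ) (θ₀ : Fin p → ℝ) (hθ0 : θ 0 = θ₀)
    (hflow : ∀ t : ℝ, HasDerivAt θ
      (-(1 / (m : ℝ)) •
        ((J (θ t)).transpose.mulVec
          (A.transpose.mulVec (A.mulVec (g (θ t)) - y)))) t)
    (hσ0 : 0 < sigmaMin (J θ₀))
    (hinit : e2norm (y - A.mulVec (g θ₀)) / σA < sigmaMin (J θ₀) ^ 2 / (4 * L)) :
    ∀ t, 0 ≤ t →
      e2norm (A.mulVec (g (θ t)) - y) ≤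
        e2norm (A.mulVec (g θ₀) - y) *
          Real.exp (-(sigmaMin (J θ₀) ^ 2 * σA ^ 2 / (4 * m)) * t) := by
  obtain ⟨x₀, hx₀⟩ := hy
  have hmR : (0:ℝ) < m := by exact_mod_cast hm
  -- unit vector in ℝ^n exists
  have hne : ∃ v : Fin n → ℝ, e2norm v = 1 := by
    by_contra hno
    push_neg at hno
    have hempty : {c | ∃ v : Fin n → ℝ, e2norm v = 1 ∧
        c = e2norm ((J θ₀).transpose.mulVec v)} = ∅ := by
      ext c
      simp only [Set.mem_setOf_eq, Set.mem_empty_iff_false, iff_false, not_exists]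
      intro v hv
      exact absurd hv.1 (hno v)
    rw [show sigmaMin (J θ₀) = sInf {c | ∃ v : Fin n → ℝ, e2norm v = 1 ∧
        c = e2norm ((J θ₀).transpose.mulVec v)} from rfl, hempty, Real.sInf_empty] at hσ0
    exact lt_irrefl 0 hσ0
  set σ0 : ℝ := sigmaMin (J θ₀) with hσ0def
  set b : ℝ := σ0 * σA / 2 with hbdef
  have hbpos : 0 < b := by rw [hbdef]; positivity
  set κ : ℝ := σ0 ^ 2 * σA ^ 2 / (2 * m) with hκdef
  have hκpos : 0 < κ := by rw [hκdef]; positivity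
  set R : ℝ := σ0 / (2 * L) with hRdef
  have hRpos : 0 < R := by rw [hRdef]; positivity
  set r : ℝ → Fin m → ℝ := fun s => A.mulVec (g (θ s)) - y with hrdef
  set q : ℝ → Fin p → ℝ :=
    fun s => (J (θ s)).transpose.mulVec (A.transpose.mulVec (r s)) with hqdef
  set φ : ℝ → ℝ := fun s => ∑ i, (r s i) ^ 2 with hφdef
  have hφnonneg : ∀ s, 0 ≤ φ s := fun s =>
    Finset.sum_nonneg fun i _ => sq_nonneg _
  have hsqrtφ : ∀ s, e2norm (r s) = Real.sqrt (φ s) := fun s => rfl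
  set ρ : ℝ := e2norm (A.mulVec (g θ₀) - y) with hρdef
  have hρ0 : ρ = Real.sqrt (φ 0) := by rw [hρdef, ← hsqrtφ 0, hrdef]; simp [hθ0]
  have hρnonneg : 0 ≤ ρ := e2norm_nonneg _
  have hφ0 : φ 0 = ρ ^ 2 := by
    rw [hρ0, Real.sq_sqrt (hφnonneg 0)]
  have hflow' : ∀ s, HasDerivAt θ (-(1 / (m : ℝ)) • q s) s := fun s => hflow s
  have hθcont : Continuous θ :=
    continuous_iff_continuousAt.2 fun s => (hflow' s).continuousAt
  -- derivative of the residual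
  have hrd : ∀ s, HasDerivAt r
      (A.mulVec ((J (θ s)).mulVec (-(1 / (m : ℝ)) • q s))) s := by
    intro s
    have h1 : HasDerivAt (fun u => g (θ u)) ((J (θ s)).mulVec (-(1 / (m : ℝ)) • q s)) s := by
      have h := (hg (θ s)).comp_hasDerivAt s (hflow' s)
      simpa [Matrix.mulVecLin_apply, Function.comp_def] using h
    have h2 := (LinearMap.toContinuousLinearMap
      (Matrix.mulVecLin A)).hasFDerivAt.comp_hasDerivAt s h1
    have h3 := h2.sub_const y
    simpa [Matrix.mulVecLin_apply, hrdef] using h3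
  -- derivative of φ
  have hφd : ∀ s, HasDerivAt φ (-(2 / (m : ℝ)) * e2norm (q s) ^ 2) s := by
    intro s
    have hco : ∀ i : Fin m, HasDerivAt (fun u => r u i)
        ((A.mulVec ((J (θ s)).mulVec (-(1 / (m : ℝ)) • q s))) i) s := by
      intro i
      have h := (ContinuousLinearMap.proj (R := ℝ)
        (φ := fun _ : Fin m => ℝ) i).hasFDerivAt.comp_hasDerivAt s (hrd s)
      simpa [Function.comp_def] using h
    have hsum : HasDerivAt (fun u => ∑ i, r u i ^ 2)
        (∑ i, 2 * r s i * (A.mulVec ((J (θ s)).mulVec (-(1 / (m : ℝ)) • q s))) i) s := by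
      apply HasDerivAt.fun_sum
      intro i _
      have h := (hco i).pow 2
      refine h.congr_deriv ?_
      push_cast
      ring
    have hval : (∑ i, 2 * r s i * (A.mulVec ((J (θ s)).mulVec (-(1 / (m : ℝ)) • q s))) i)
        = -(2 / (m : ℝ)) * e2norm (q s) ^ 2 := by
      have e1 : (∑ i, 2 * r s i * (A.mulVec ((J (θ s)).mulVec (-(1 / (m : ℝ)) • q s))) i)
          = 2 * dotProduct (r s)
            (A.mulVec ((J (θ s)).mulVec (-(1 / (m : ℝ)) • q s))) := by
        simp [dotProduct, Finset.mul_sum, mul_assoc]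
      rw [e1, dot_shift,
        show (J (θ s)).transpose.mulVec (A.transpose.mulVec (r s)) = q s from rfl]
      rw [dotProduct_smul, dotProduct_self_eq]
      simp only [smul_eq_mul]
      ring
    rw [← hval]
    exact hsum
  have hφcont : Continuous φ :=
    continuous_iff_continuousAt.2 fun s => (hφd s).continuousAt
  -- σA inequality
  have hAr : ∀ s, σA * e2norm (r s) ≤ e2norm (A.transpose.mulVec (r s)) := by
    intro s
    rcases eq_or_ne (r s) 0 with h0 | h0
    · rw [h0]; simp [e2norm_zero, Matrix.mulVec_zero]
    · have hpos := e2norm_pos_of_ne h0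
      have hmem : e2norm (A.transpose.mulVec (r s)) / e2norm (r s) ∈
          {c | ∃ w : Fin m → ℝ, (∃ x : Fin n → ℝ, w = A.mulVec x) ∧
            w ≠ 0 ∧ c = e2norm (A.transpose.mulVec w) / e2norm w} := by
        refine ⟨r s, ⟨g (θ s) - x₀, ?_⟩, h0, rfl⟩
        rw [Matrix.mulVec_sub, ← hx₀]
      have hbdd : BddBelow {c | ∃ w : Fin m → ℝ, (∃ x : Fin n → ℝ, w = A.mulVec x) ∧
          w ≠ 0 ∧ c = e2norm (A.transpose.mulVec w) / e2norm w} := by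
        refine ⟨0, ?_⟩
        rintro c ⟨w, -, -, rfl⟩
        exact div_nonneg (e2norm_nonneg _) (e2norm_nonneg _)
      have hle : σA ≤ e2norm (A.transpose.mulVec (r s)) / e2norm (r s) := by
        rw [hσA]
        exact csInf_le hbdd hmem
      calc σA * e2norm (r s)
          ≤ (e2norm (A.transpose.mulVec (r s)) / e2norm (r s)) * e2norm (r s) :=
            mul_le_mul_of_nonneg_right hle (le_of_lt hpos)
        _ = e2norm (A.transpose.mulVec (r s)) := by field_simp
  -- key bound in the good region
  have hkey : ∀ s, e2norm (θ s - θ₀) ≤ R → b * Real.sqrt (φ s) ≤ e2norm (q s) := by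
    intro s hgd
    have h1 : sigmaMin (J (θ s)) * e2norm (A.transpose.mulVec (r s)) ≤ e2norm (q s) :=
      sigmaMin_mul_le (J (θ s)) (A.transpose.mulVec (r s))
    have h2 : σ0 / 2 ≤ sigmaMin (J (θ s)) := by
      have hp := sigmaMin_perturb (J (θ s)) (J θ₀) hne
      have hlip := hLip θ₀ (θ s)
      have he : e2norm (θ₀ - θ s) = e2norm (θ s - θ₀) := e2norm_sub_rev _ _
      have hLR : L * R = σ0 / 2 := by
        rw [hRdef]; field_simp
      have : opN (J θ₀ - J (θ s)) ≤ σ0 / 2 := by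
        calc opN (J θ₀ - J (θ s)) ≤ L * e2norm (θ₀ - θ s) := hlip
          _ = L * e2norm (θ s - θ₀) := by rw [he]
          _ ≤ L * R := mul_le_mul_of_nonneg_left hgd (le_of_lt hL)
          _ = σ0 / 2 := hLR
      rw [← hσ0def] at hp
      linarith
    have h3 := hAr s
    have h4 : e2norm (r s) = Real.sqrt (φ s) := hsqrtφ s
    have hAT := e2norm_nonneg (A.transpose.mulVec (r s))
    have hrn := e2norm_nonneg (r s)
    have hsm := sigmaMin_nonneg (J (θ s))
    rw [hbdef, ← h4]
    nlinarith [mul_le_mul_of_nonneg_left h3 hsm,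
      mul_le_mul_of_nonneg_right h2 hAT]
  -- Grönwall
  have hgron : ∀ T, 0 ≤ T → (∀ s ∈ Set.Ico (0:ℝ) T, e2norm (θ s - θ₀) ≤ R) →
      ∀ t ∈ Set.Icc (0:ℝ) T, φ t ≤ φ 0 * Real.exp (-κ * t) := by
    intro T hT hgood t htmem
    have hexp : ∀ u : ℝ, HasDerivAt (fun v => Real.exp (κ * v)) (Real.exp (κ * u) * κ) u :=
      fun u => by simpa using ((hasDerivAt_id u).const_mul κ).exp
    have hder : ∀ u, HasDerivAt (fun v => φ v * Real.exp (κ * v))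
        (-(2 / (m : ℝ)) * e2norm (q u) ^ 2 * Real.exp (κ * u)
          + φ u * (Real.exp (κ * u) * κ)) u :=
      fun u => (hφd u).mul (hexp u)
    have hanti : AntitoneOn (fun v => φ v * Real.exp (κ * v)) (Set.Icc 0 T) := by
      apply antitoneOn_of_deriv_nonpos (convex_Icc 0 T)
      · exact (hφcont.mul (Real.continuous_exp.comp (continuous_const.mul
          continuous_id))).continuousOn
      · intro u hu
        rw [interior_Icc] at hu
        exact ((hder u).differentiableAt).differentiableWithinAt
      · intro u hu
        rw [interior_Icc] at hu
        rw [(hder u).deriv]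
        have hgd : e2norm (θ u - θ₀) ≤ R := hgood u ⟨le_of_lt hu.1, hu.2⟩
        have hq := hkey u hgd
        have h5 : b ^ 2 * φ u ≤ e2norm (q u) ^ 2 := by
          have hbs : 0 ≤ b * Real.sqrt (φ u) := by positivity
          have h6' := mul_le_mul hq hq hbs (e2norm_nonneg (q u))
          have hss := Real.sq_sqrt (hφnonneg u)
          nlinarith [h6', hss]
        have hκb : κ = 2 / (m : ℝ) * b ^ 2 := by
          rw [hκdef, hbdef]; ring
        have hfact : -(2 / (m : ℝ)) * e2norm (q u) ^ 2 + φ u * κ ≤ 0 := by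
          rw [hκb]
          have hc : (0:ℝ) ≤ 2 / (m : ℝ) := by positivity
          have h7 := mul_le_mul_of_nonneg_left h5 hc
          have hrng : -(2 / (m : ℝ)) * e2norm (q u) ^ 2 + φ u * (2 / (m : ℝ) * b ^ 2)
              = (2 / (m : ℝ)) * (b ^ 2 * φ u) - (2 / (m : ℝ)) * (e2norm (q u) ^ 2) := by
            ring
          rw [hrng]
          linarith
        have hexp_pos := Real.exp_pos (κ * u)
        calc -(2 / (m : ℝ)) * e2norm (q u) ^ 2 * Real.exp (κ * u)
              + φ u * (Real.exp (κ * u) * κ)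
            = (-(2 / (m : ℝ)) * e2norm (q u) ^ 2 + φ u * κ) * Real.exp (κ * u) := by
              ring
          _ ≤ 0 := mul_nonpos_of_nonpos_of_nonneg hfact (le_of_lt hexp_pos)
    have h6 : φ t * Real.exp (κ * t) ≤ φ 0 * Real.exp (κ * 0) :=
      hanti ⟨le_refl 0, hT⟩ htmem htmem.1
    rw [mul_zero, Real.exp_zero, mul_one] at h6
    have h7 := mul_le_mul_of_nonneg_right h6 (Real.exp_nonneg (-κ * t))
    calc φ t = φ t * Real.exp (κ * t) * Real.exp (-κ * t) := by
          rw [mul_assoc, ← Real.exp_add]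
          simp
      _ ≤ φ 0 * Real.exp (-κ * t) := h7
  set K : ℝ := 2 / (σ0 * σA) * ρ with hKdef
  have hKR : K < R := by
    have hinit' : ρ / σA < σ0 ^ 2 / (4 * L) := by
      rw [hρdef, e2norm_sub_rev]
      exact hinit
    have h1 : ρ < σ0 ^ 2 / (4 * L) * σA := (div_lt_iff₀ hσApos).1 hinit'
    have h1' : ρ * (4 * L) < σ0 ^ 2 * σA := by
      rw [div_mul_eq_mul_div] at h1
      have := (lt_div_iff₀ (by positivity : (0:ℝ) < 4 * L)).1 h1
      linarith
    rw [hKdef, hRdef, div_mul_eq_mul_div, div_lt_div_iff₀ (by positivity) (by positivity)]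
    nlinarith [h1', hρnonneg, hσ0, hσApos, hL]
  -- path-length bound
  have hmvt : ∀ T, 0 ≤ T → (∀ s ∈ Set.Ico (0:ℝ) T, e2norm (θ s - θ₀) ≤ R) →
      ∀ t ∈ Set.Icc (0:ℝ) T, e2norm (θ t - θ₀) ≤ K := by
    intro T hT hgood t htmem
    have hC : 0 < 2 / (σ0 * σA) + b * T / m :=
      add_pos_of_pos_of_nonneg (div_pos two_pos (mul_pos hσ0 hσApos))
        (by positivity)
    refine le_of_forall_pos_le_add fun δ hδ => ?_
    set ε : ℝ := δ / (2 / (σ0 * σA) + b * T / m) with hεdef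
    have hεpos : 0 < ε := div_pos hδ hC
    -- the regularized norm ψ
    set ψ : ℝ → ℝ := fun u => Real.sqrt (φ u + ε ^ 2) with hψdef
    have hψpos : ∀ u, 0 < ψ u := fun u =>
      Real.sqrt_pos.2 (by have := hφnonneg u; positivity)
    have hψnonneg : ∀ u, 0 ≤ ψ u := fun u => le_of_lt (hψpos u)
    have hψd : ∀ u, HasDerivAt ψ
        ((-(2 / (m : ℝ)) * e2norm (q u) ^ 2) / (2 * ψ u)) u := by
      intro u
      have hpos : 0 < φ u + ε ^ 2 := by have := hφnonneg u; positivity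
      have h1 := (hφd u).add_const (ε ^ 2)
      have h2 := (Real.hasDerivAt_sqrt (ne_of_gt hpos)).comp u h1
      have : ψ u = Real.sqrt (φ u + ε ^ 2) := rfl
      refine h2.congr_deriv ?_
      rw [this]
      ring
    -- the barrier B
    set B : ℝ → ℝ := fun u => 2 / (σ0 * σA) * (ψ 0 - ψ u) + (b * ε / m) * u
      with hBdef
    set B' : ℝ → ℝ := fun u =>
      2 / (σ0 * σA) * (0 - (-(2 / (m : ℝ)) * e2norm (q u) ^ 2) / (2 * ψ u)) + b * ε / m
      with hB'def
    have hBd : ∀ u, HasDerivAt B (B' u) u := by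
      intro u
      have h1 := (hasDerivAt_const u (ψ 0)).sub (hψd u)
      have h2 := h1.const_mul (2 / (σ0 * σA))
      have h3 := (hasDerivAt_id u).const_mul (b * ε / (m : ℝ))
      have h4 := h2.add h3
      refine h4.congr_deriv ?_
      rw [hB'def]
      simp
    -- the displacement as a curve in Euclidean space
    have hfd : ∀ u, HasDerivAt (fun v => toE (θ v - θ₀)) (toE (-(1 / (m : ℝ)) • q u)) u := by
      intro u
      have h0 : HasDerivAt (fun v => θ v - θ₀) (-(1 / (m : ℝ)) • q u) u :=
        (hflow' u).sub_const θ₀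
      exact ((PiLp.continuousLinearEquiv 2 ℝ
        (fun _ : Fin p => ℝ)).symm.toContinuousLinearMap.hasFDerivAt).comp_hasDerivAt u h0
    have hcont : ContinuousOn (fun v => toE (θ v - θ₀)) (Set.Icc (0:ℝ) T) :=
      (continuous_iff_continuousAt.2 fun u => (hfd u).continuousAt).continuousOn
    have ha0 : ‖toE (θ 0 - θ₀)‖ ≤ B 0 := by
      rw [← e2norm_eq, hθ0, sub_self]
      rw [e2norm_zero, hBdef]
      simp
    have hbound : ∀ x ∈ Set.Ico (0:ℝ) T, ‖toE (-(1 / (m : ℝ)) • q x)‖ ≤ B' x := by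
      intro x hx
      have hgd := hgood x hx
      have hq := hkey x hgd
      have hnorm : ‖toE (-(1 / (m : ℝ)) • q x)‖ = e2norm (q x) / m := by
        rw [← e2norm_eq, e2norm_smul]
        rw [abs_neg, abs_of_pos (by positivity : (0:ℝ) < 1 / (m:ℝ))]
        field_simp
      rw [hnorm]
      have halg := aux_alg (e2norm_nonneg (q x)) hbpos hεpos hmR
        (Real.sqrt_nonneg (φ x)) hq
        (show ψ x = Real.sqrt (Real.sqrt (φ x) ^ 2 + ε ^ 2) by
          rw [hψdef]; simp [Real.sq_sqrt (hφnonneg x)])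
      have hBx : B' x = e2norm (q x) ^ 2 / (b * m * ψ x) + b * ε / m := by
        rw [hB'def]
        have h2b : σ0 * σA = 2 * b := by rw [hbdef]; ring
        rw [h2b]
        have hψx := hψpos x
        field_simp
        ring
      rw [hBx]
      calc e2norm (q x) / m ≤ e2norm (q x) ^ 2 / (b * m * ψ x) + b * ε / m := by
            have : e2norm (q x) / m = e2norm (q x) / (m:ℝ) := rfl
            exact halg
        _ = _ := rfl
    -- conclude with the ε-bound
    have himg := image_norm_le_of_norm_deriv_right_le_deriv_boundary hcont
      (fun x _ => (hfd x).hasDerivWithinAt) ha0 hBd hbound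
    have hval := himg htmem
    rw [← e2norm_eq] at hval
    have hψ0le : ψ 0 ≤ ρ + ε := by
      show Real.sqrt (φ 0 + ε ^ 2) ≤ ρ + ε
      rw [hφ0]
      calc Real.sqrt (ρ ^ 2 + ε ^ 2) ≤ Real.sqrt ((ρ + ε) ^ 2) :=
            Real.sqrt_le_sqrt (by nlinarith)
        _ = ρ + ε := Real.sqrt_sq (by positivity)
    have hBt : B t ≤ K + δ := by
      rw [hBdef, hKdef]
      have h1 : ψ 0 - ψ t ≤ ρ + ε := by
        have := hψnonneg t
        linarith
      have h2 : 2 / (σ0 * σA) * (ψ 0 - ψ t) ≤ 2 / (σ0 * σA) * (ρ + ε) :=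
        mul_le_mul_of_nonneg_left h1 (by positivity)
      have h3 : (b * ε / m) * t ≤ (b * ε / m) * T :=
        mul_le_mul_of_nonneg_left htmem.2 (by positivity)
      have h4 : 2 / (σ0 * σA) * ε + (b * ε / m) * T = δ := by
        have : 2 / (σ0 * σA) * ε + (b * ε / m) * T
            = ε * (2 / (σ0 * σA) + b * T / m) := by ring
        rw [this, hεdef, div_mul_cancel₀ _ (ne_of_gt hC)]
      nlinarith [h2, h3, h4]
    linarith [hval, hBt]
  -- bootstrap
  have hgood : ∀ s, 0 ≤ s → e2norm (θ s - θ₀) ≤ R := by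
    intro s₀ hs₀
    by_contra hbad
    push_neg at hbad
    have hvalcont : Continuous (fun u => e2norm (θ u - θ₀)) := by
      have heq : (fun u => e2norm (θ u - θ₀)) = fun u => ‖toE (θ u - θ₀)‖ :=
        funext fun u => e2norm_eq _
      rw [heq]
      have h1 : Continuous (fun u => θ u - θ₀) := hθcont.sub continuous_const
      have h2 : Continuous (fun u => toE (θ u - θ₀)) :=
        ((PiLp.continuousLinearEquiv 2 ℝ
          (fun _ : Fin p => ℝ)).symm.continuous).comp h1
      exact h2.norm
    set U : Set ℝ := Set.Icc 0 s₀ ∩ {u | R ≤ e2norm (θ u - θ₀)} with hUdef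
    have hUclosed : IsClosed U :=
      IsClosed.inter isClosed_Icc (isClosed_le continuous_const hvalcont)
    have hUne : U.Nonempty := ⟨s₀, ⟨⟨hs₀, le_refl s₀⟩, le_of_lt hbad⟩⟩
    have hUbdd : BddBelow U := ⟨0, fun u hu => hu.1.1⟩
    set T' := sInf U with hT'def
    have hT'mem : T' ∈ U := hUclosed.csInf_mem hUne hUbdd
    have hT'0 : 0 ≤ T' := hT'mem.1.1
    have hgoodT' : ∀ u ∈ Set.Ico (0:ℝ) T', e2norm (θ u - θ₀) ≤ R := by
      intro u hu
      by_contra hc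
      push_neg at hc
      have hmem : u ∈ U :=
        ⟨⟨hu.1, le_trans (le_of_lt hu.2) hT'mem.1.2⟩, le_of_lt hc⟩
      have := csInf_le hUbdd hmem
      rw [← hT'def] at this
      linarith [hu.2]
    have hcontr := hmvt T' hT'0 hgoodT' T' ⟨hT'0, le_refl T'⟩
    have hRK := hT'mem.2
    simp only [Set.mem_setOf_eq] at hRK
    linarith
  -- conclusion
  intro t ht
  have hG := hgron t ht (fun s hs => hgood s hs.1) t ⟨ht, le_refl t⟩
  have hgoal : e2norm (r t) ≤ ρ * Real.exp (-(σ0 ^ 2 * σA ^ 2 / (4 * m)) * t) := by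
    rw [hsqrtφ t]
    have h1 : φ t ≤ (ρ * Real.exp (-(σ0 ^ 2 * σA ^ 2 / (4 * m)) * t)) ^ 2 := by
      have h2 : (ρ * Real.exp (-(σ0 ^ 2 * σA ^ 2 / (4 * m)) * t)) ^ 2
          = ρ ^ 2 * Real.exp (-κ * t) := by
        rw [mul_pow, ← Real.exp_nat_mul]
        congr 1
        rw [hκdef]
        push_cast
        ring
      rw [h2, ← hφ0]
      exact hG
    calc Real.sqrt (φ t)
        ≤ Real.sqrt ((ρ * Real.exp (-(σ0 ^ 2 * σA ^ 2 / (4 * m)) * t)) ^ 2) :=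
          Real.sqrt_le_sqrt h1
      _ = ρ * Real.exp (-(σ0 ^ 2 * σA ^ 2 / (4 * m)) * t) :=
          Real.sqrt_sq (by positivity)
  exact hgoal
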